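/- arXiv:1710.05093 — 4 statements merged into one kernel-verified Lean document; each statement's English description precedes it below -/
import Mathlib

section
/- For topological spaces (or manifolds) M and N and a natural number k, the configuration space of k ordered points in the disjoint union M ⊔ N is homeomorphic to the disjoint union over i + j = k of Conf_i(M) × Conf_j(N) ×_{Σ_i × Σ_j} Σ_k, i.e., the quotient of Conf_i(M) × Conf_j(N) × Σ_k by the action of Σ_i × Σ_j. -/
open Equiv

open Topology Filter

/-- The ordered configuration space of `k` points in `X`, topologized as a subspace of
`X^k`. -/
def Conf (k : ℕ) (X : Type*) [TopologicalSpace X] : Type _ :=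
  {f : Fin k → X // Function.Injective f}

instance (k : ℕ) (X : Type*) [TopologicalSpace X] : TopologicalSpace (Conf k X) :=
  instTopologicalSpaceSubtype

/-- The symmetric group `Σ_k` is regarded as a discrete topological space. -/
instance (k : ℕ) : TopologicalSpace (Perm (Fin k)) := ⊥

instance (k : ℕ) : DiscreteTopology (Perm (Fin k)) := ⟨rfl⟩

/-- The block inclusion `Σ_i × Σ_j → Σ_k` (for `i + j = k`). -/
def blockPerm {i j k : ℕ} (h : i + j = k) (σ : Perm (Fin i)) (τ : Perm (Fin j)) :
    Perm (Fin k) :=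
  ((finCongr h).symm.trans (finSumFinEquiv.symm.trans
    ((σ.sumCongr τ).trans (finSumFinEquiv.trans (finCongr h)))))

/-- The relation on `Conf_i(M) × Conf_j(N) × Σ_k` generating the quotient by the action
of `Σ_i × Σ_j`: `((a∘σ, b∘τ), π) ∼ ((a, b), (σ⊕τ)·π)`. -/
def confRel {i j k : ℕ} (h : i + j = k) (M N : Type*) [TopologicalSpace M]
    [TopologicalSpace N] :
    (Conf i M × Conf j N × Perm (Fin k)) → (Conf i M × Conf j N × Perm (Fin k)) → Prop :=
  fun x y => ∃ (σ : Perm (Fin i)) (τ : Perm (Fin j)),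
    x.1.1 = y.1.1 ∘ σ ∧ x.2.1.1 = y.2.1.1 ∘ τ ∧ y.2.2 = blockPerm h σ τ * x.2.2

namespace ConfDisjointAux

variable {M N : Type*} [TopologicalSpace M] [TopologicalSpace N] {i j k : ℕ}

/-- The block equivalence `Fin i ⊕ Fin j ≃ Fin k`. -/
def E (h : i + j = k) : Fin i ⊕ Fin j ≃ Fin k :=
  finSumFinEquiv.trans (finCongr h)

lemma blockPerm_apply (h : i + j = k) (σ : Perm (Fin i)) (τ : Perm (Fin j)) (x : Fin k) :
    blockPerm h σ τ x = E h (Sum.map σ τ ((E h).symm x)) := rfl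

/-- The underlying function of `F`. -/
def gfun (h : i + j = k) (a : Fin i → M) (b : Fin j → N) (π : Perm (Fin k)) :
    Fin k → M ⊕ N := fun x => Sum.map a b ((E h).symm (π x))

lemma gfun_injective (h : i + j = k) {a : Fin i → M} {b : Fin j → N} {π : Perm (Fin k)}
    (ha : Function.Injective a) (hb : Function.Injective b) :
    Function.Injective (gfun h a b π) :=
  (Sum.map_injective.mpr ⟨ha, hb⟩).comp ((E h).symm.injective.comp π.injective)

/-- The map `Conf_i M × Conf_j N × Σ_k → Conf_k (M ⊕ N)`. -/
def F (h : i + j = k) (x : Conf i M × Conf j N × Perm (Fin k)) : Conf k (M ⊕ N) :=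
  ⟨gfun h x.1.1 x.2.1.1 x.2.2, gfun_injective h x.1.2 x.2.1.2⟩

lemma F_sound (h : i + j = k) (x y : Conf i M × Conf j N × Perm (Fin k))
    (hxy : confRel h M N x y) : F h x = F h y := by
  obtain ⟨σ, τ, ha, hb, hπ⟩ := hxy
  apply Subtype.ext
  funext z
  show Sum.map x.1.1 x.2.1.1 ((E h).symm (x.2.2 z))
      = Sum.map y.1.1 y.2.1.1 ((E h).symm (y.2.2 z))
  rw [hπ, ha, hb]
  simp only [Equiv.Perm.coe_mul, Function.comp_apply, blockPerm_apply,
    Equiv.symm_apply_apply, Sum.map_map]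

/-- The (putative) homeomorphism, as a bare function. -/
def Phi (k : ℕ) (M N : Type*) [TopologicalSpace M] [TopologicalSpace N] :
    (Σ p : {p : ℕ × ℕ // p.1 + p.2 = k}, Quot (confRel p.2 M N)) → Conf k (M ⊕ N) :=
  fun x => Quot.lift (F x.1.2) (F_sound x.1.2) x.2

/-- The set of indices sent by `f` into the left summand. -/
def Sset (f : Conf k (M ⊕ N)) : Finset (Fin k) :=
  Finset.univ.filter fun x => (f.1 x).isLeft

lemma mem_Sset {f : Conf k (M ⊕ N)} {x : Fin k} : x ∈ Sset f ↔ (f.1 x).isLeft := by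
  simp [Sset]

lemma hcard (S : Finset (Fin k)) : S.card + Sᶜ.card = k := by
  simpa using S.card_add_card_compl

/-- The order-preserving identification of `Fin S.card ⊕ Fin Sᶜ.card` with `Fin k`. -/
def phiS (S : Finset (Fin k)) : Fin S.card ⊕ Fin Sᶜ.card ≃ Fin k :=
  (Equiv.sumCongr (S.orderIsoOfFin rfl).toEquiv ((Sᶜ).orderIsoOfFin rfl).toEquiv).trans
    ((Equiv.sumCongr (Equiv.refl _) (Equiv.subtypeEquivRight fun _ => Finset.mem_compl)).trans
      (Equiv.sumCompl (· ∈ S)))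

lemma phiS_inl (S : Finset (Fin k)) (m : Fin S.card) : phiS S (Sum.inl m) ∈ S := by
  simpa [phiS] using (S.orderIsoOfFin rfl m).2

lemma phiS_inr (S : Finset (Fin k)) (n : Fin Sᶜ.card) : phiS S (Sum.inr n) ∉ S := by
  have := ((Sᶜ).orderIsoOfFin rfl n).2
  rw [Finset.mem_compl] at this
  simpa [phiS] using this

/-- The canonical permutation associated to a subset `S`. -/
def piS (S : Finset (Fin k)) : Perm (Fin k) := (phiS S).symm.trans (E (hcard S))

lemma E_symm_piS (S : Finset (Fin k)) (x : Fin k) :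
    (E (hcard S)).symm (piS S x) = (phiS S).symm x := by
  simp [piS]

lemma isLeft_of_mem {f : Conf k (M ⊕ N)} {S : Finset (Fin k)} (hf : Sset f = S) {x : Fin k}
    (hx : x ∈ S) : (f.1 x).isLeft := by
  rw [← hf] at hx; exact mem_Sset.mp hx

lemma isRight_of_not_mem {f : Conf k (M ⊕ N)} {S : Finset (Fin k)} (hf : Sset f = S)
    {x : Fin k} (hx : x ∉ S) : (f.1 x).isRight := by
  rw [← hf] at hx
  exact Sum.not_isLeft.mp fun h => hx (mem_Sset.mpr h)

/-- The left part of a configuration whose left index set is `S`. -/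
def aOf (S : Finset (Fin k)) (u : {f : Conf k (M ⊕ N) // Sset f = S}) : Conf S.card M :=
  ⟨fun m => (u.1.1 (phiS S (Sum.inl m))).getLeft (isLeft_of_mem u.2 (phiS_inl S m)), by
    intro m m' hmm
    have h1 := Sum.inl_getLeft (u.1.1 (phiS S (Sum.inl m))) (isLeft_of_mem u.2 (phiS_inl S m))
    have h2 := Sum.inl_getLeft (u.1.1 (phiS S (Sum.inl m'))) (isLeft_of_mem u.2 (phiS_inl S m'))
    have hval : u.1.1 (phiS S (Sum.inl m)) = u.1.1 (phiS S (Sum.inl m')) := by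
      rw [← h1, ← h2]; exact congrArg Sum.inl hmm
    exact Sum.inl_injective ((phiS S).injective (u.1.2 hval))⟩

/-- The right part of a configuration whose left index set is `S`. -/
def bOf (S : Finset (Fin k)) (u : {f : Conf k (M ⊕ N) // Sset f = S}) : Conf Sᶜ.card N :=
  ⟨fun n => (u.1.1 (phiS S (Sum.inr n))).getRight (isRight_of_not_mem u.2 (phiS_inr S n)), by
    intro n n' hnn
    have h1 := Sum.inr_getRight (u.1.1 (phiS S (Sum.inr n))) (isRight_of_not_mem u.2 (phiS_inr S n))
    have h2 := Sum.inr_getRight (u.1.1 (phiS S (Sum.inr n'))) (isRight_of_not_mem u.2 (phiS_inr S n'))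
    have hval : u.1.1 (phiS S (Sum.inr n)) = u.1.1 (phiS S (Sum.inr n')) := by
      rw [← h1, ← h2]; exact congrArg Sum.inr hnn
    exact Sum.inr_injective ((phiS S).injective (u.1.2 hval))⟩

/-- The inverse map, on the fiber over a fixed `S`. -/
def PsiS (S : Finset (Fin k)) (u : {f : Conf k (M ⊕ N) // Sset f = S}) :
    Σ p : {p : ℕ × ℕ // p.1 + p.2 = k}, Quot (confRel p.2 M N) :=
  ⟨⟨(S.card, Sᶜ.card), hcard S⟩, Quot.mk _ (aOf S u, bOf S u, piS S)⟩

/-- The inverse map. -/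
def Psi (f : Conf k (M ⊕ N)) :
    Σ p : {p : ℕ × ℕ // p.1 + p.2 = k}, Quot (confRel p.2 M N) :=
  PsiS (Sset f) ⟨f, rfl⟩

lemma Psi_eq {S : Finset (Fin k)} (f : Conf k (M ⊕ N)) (hf : Sset f = S) :
    Psi f = PsiS S ⟨f, hf⟩ := by subst hf; rfl

lemma Phi_PsiS (S : Finset (Fin k)) (u : {f : Conf k (M ⊕ N) // Sset f = S}) :
    Phi k M N (PsiS S u) = u.1 := by
  apply Subtype.ext
  funext x
  show Sum.map (aOf S u).1 (bOf S u).1 ((E (hcard S)).symm (piS S x)) = u.1.1 x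
  rw [E_symm_piS]
  obtain ⟨s, hs⟩ : ∃ s, phiS S s = x := ⟨(phiS S).symm x, Equiv.apply_symm_apply _ _⟩
  rw [← hs, Equiv.symm_apply_apply]
  cases s with
  | inl m => exact Sum.inl_getLeft _ _
  | inr n => exact Sum.inr_getRight _ _

lemma Phi_Psi (f : Conf k (M ⊕ N)) : Phi k M N (Psi f) = f := Phi_PsiS _ _

lemma card_Sset_F (h : i + j = k) (x : Conf i M × Conf j N × Perm (Fin k)) :
    (Sset (F h x)).card = i := by
  obtain ⟨⟨a, ha⟩, ⟨b, hb⟩, π⟩ := x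
  have hinj : Function.Injective fun m : Fin i => π⁻¹ (E h (Sum.inl m)) := by
    intro m m' hm
    exact Sum.inl_injective ((E h).injective (π⁻¹.injective hm))
  have hset : Sset (F h ((⟨a, ha⟩ : Conf i M), (⟨b, hb⟩ : Conf j N), π))
      = Finset.map ⟨fun m => π⁻¹ (E h (Sum.inl m)), hinj⟩ Finset.univ := by
    ext z
    simp only [mem_Sset, Finset.mem_map, Finset.mem_univ, true_and,
      Function.Embedding.coeFn_mk]
    constructor
    · intro hl
      have hl' : ((E h).symm (π z)).isLeft := by
        have := hl
        rwa [show ((F h ((⟨a, ha⟩ : Conf i M), (⟨b, hb⟩ : Conf j N), π)).1 z)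
            = Sum.map a b ((E h).symm (π z)) from rfl, Sum.isLeft_map] at this
      obtain ⟨m, hm⟩ := Sum.isLeft_iff.mp hl'
      refine ⟨m, ?_⟩
      rw [← hm]
      simp
    · rintro ⟨m, rfl⟩
      show (Sum.map a b ((E h).symm (π (π⁻¹ (E h (Sum.inl m)))))).isLeft
      simp [Sum.isLeft_map]
  rw [hset, Finset.card_map, Finset.card_univ, Fintype.card_fin]

lemma quot_eq_of_F_eq (h : i + j = k) (x y : Conf i M × Conf j N × Perm (Fin k))
    (hxy : F h x = F h y) :
    Quot.mk (confRel h M N) x = Quot.mk (confRel h M N) y := by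
  obtain ⟨⟨a, ha⟩, ⟨b, hb⟩, π⟩ := x
  obtain ⟨⟨a', ha'⟩, ⟨b', hb'⟩, π'⟩ := y
  have hg : ∀ z, Sum.map a b ((E h).symm (π z)) = Sum.map a' b' ((E h).symm (π' z)) :=
    fun z => congrFun (congrArg Subtype.val hxy) z
  let ρ : Fin i ⊕ Fin j ≃ Fin i ⊕ Fin j :=
    (E h).trans ((π'.symm : Fin k ≃ Fin k).trans ((π : Fin k ≃ Fin k).trans (E h).symm))
  have hρdef : ∀ s, ρ s = (E h).symm (π (π'.symm (E h s))) := fun s => rfl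
  have hmap : ∀ s, Sum.map a b (ρ s) = Sum.map a' b' s := by
    intro s
    rw [hρdef, hg (π'.symm (E h s))]
    simp
  have hL : ∀ m, (ρ (Sum.inl m)).isLeft := by
    intro m
    have h2 : (Sum.map a b (ρ (Sum.inl m))).isLeft := by rw [hmap]; rfl
    rwa [Sum.isLeft_map] at h2
  have hR : ∀ n, (ρ (Sum.inr n)).isRight := by
    intro n
    have h2 : (Sum.map a b (ρ (Sum.inr n))).isRight := by rw [hmap]; rfl
    rwa [Sum.isRight_map] at h2
  have hρinl : ∀ m, ρ (Sum.inl m) = Sum.inl ((ρ (Sum.inl m)).getLeft (hL m)) :=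
    fun m => (Sum.inl_getLeft _ (hL m)).symm
  have hρinr : ∀ n, ρ (Sum.inr n) = Sum.inr ((ρ (Sum.inr n)).getRight (hR n)) :=
    fun n => (Sum.inr_getRight _ (hR n)).symm
  have hσinj : Function.Injective fun m => (ρ (Sum.inl m)).getLeft (hL m) := by
    intro m m' hm
    have : ρ (Sum.inl m) = ρ (Sum.inl m') := by
      rw [hρinl m, hρinl m']; exact congrArg Sum.inl hm
    exact Sum.inl_injective (ρ.injective this)
  have hτinj : Function.Injective fun n => (ρ (Sum.inr n)).getRight (hR n) := by
    intro n n' hn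
    have : ρ (Sum.inr n) = ρ (Sum.inr n') := by
      rw [hρinr n, hρinr n']; exact congrArg Sum.inr hn
    exact Sum.inr_injective (ρ.injective this)
  let σ : Perm (Fin i) := Equiv.ofBijective _ (Finite.injective_iff_bijective.mp hσinj)
  let τ : Perm (Fin j) := Equiv.ofBijective _ (Finite.injective_iff_bijective.mp hτinj)
  have hσ : ∀ m, Sum.inl (σ m) = ρ (Sum.inl m) := fun m => (hρinl m).symm
  have hτ : ∀ n, Sum.inr (τ n) = ρ (Sum.inr n) := fun n => (hρinr n).symm
  have haσ : a' = a ∘ σ := by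
    funext m
    have h2 := hmap (Sum.inl m)
    rw [← hσ m] at h2
    exact (Sum.inl_injective h2).symm
  have hbτ : b' = b ∘ τ := by
    funext n
    have h2 := hmap (Sum.inr n)
    rw [← hτ n] at h2
    exact (Sum.inr_injective h2).symm
  have hπ : π = blockPerm h σ τ * π' := by
    apply Equiv.ext
    intro z
    show π z = blockPerm h σ τ (π' z)
    rw [blockPerm_apply]
    have hst : Sum.map ⇑σ ⇑τ ((E h).symm (π' z)) = ρ ((E h).symm (π' z)) := by
      cases hs : (E h).symm (π' z) with
      | inl m => rw [← hσ m]; rfl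
      | inr n => rw [← hτ n]; rfl
    rw [hst, hρdef]
    simp
  exact (Quot.sound ⟨σ, τ, haσ, hbτ, hπ⟩).symm

lemma Phi_injective (k : ℕ) (M N : Type*) [TopologicalSpace M] [TopologicalSpace N] :
    Function.Injective (Phi k M N) := by
  rintro ⟨⟨⟨i, j⟩, hij⟩, qx⟩ ⟨⟨⟨i', j'⟩, hij'⟩, qy⟩ hq
  induction qx using Quot.ind with | _ x => ?_
  induction qy using Quot.ind with | _ y => ?_
  have hF : F hij x = F hij' y := hq
  have hi : i = i' := by
    have h1 := card_Sset_F hij x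
    have h2 := card_Sset_F hij' y
    rw [hF] at h1
    exact h1.symm.trans h2
  subst hi
  have hj : j = j' := by omega
  subst hj
  exact congrArg (Sigma.mk (⟨(i, j), hij⟩ : {p : ℕ × ℕ // p.1 + p.2 = k})) (quot_eq_of_F_eq hij x y hF)

section Continuity

lemma continuous_prod_discrete {A B D Y : Type*} [TopologicalSpace A] [TopologicalSpace B]
    [TopologicalSpace D] [DiscreteTopology D] [TopologicalSpace Y]
    (f : A × B × D → Y) (hf : ∀ d, Continuous fun p : A × B => f (p.1, p.2, d)) :
    Continuous f := by
  rw [continuous_iff_continuousAt]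
  rintro ⟨a, b, d⟩
  have hd : 𝓝 d = pure d := by rw [nhds_discrete]
  have hmap : 𝓝 (a, b, d) = Filter.map (fun p : A × B => (p.1, p.2, d)) (𝓝 (a, b)) := by
    have hida : 𝓝 a = Filter.map id (𝓝 a) := Filter.map_id.symm
    rw [nhds_prod_eq, nhds_prod_eq (x := b), hd, Filter.prod_pure, hida,
      Filter.prod_map_map_eq', ← nhds_prod_eq]
    rfl
  unfold ContinuousAt
  rw [hmap, Filter.tendsto_map'_iff]
  exact (hf d).continuousAt

lemma continuous_F (h : i + j = k) :
    Continuous (F h : Conf i M × Conf j N × Perm (Fin k) → Conf k (M ⊕ N)) := by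
  apply continuous_prod_discrete
  intro π
  apply Continuous.subtype_mk
  apply continuous_pi
  intro z
  show Continuous fun p : Conf i M × Conf j N => Sum.map p.1.1 p.2.1 ((E h).symm (π z))
  cases hs : (E h).symm (π z) with
  | inl m =>
    show Continuous fun p : Conf i M × Conf j N => Sum.inl (p.1.1 m)
    exact continuous_inl.comp ((continuous_apply m).comp
      (continuous_subtype_val.comp continuous_fst))
  | inr n =>
    show Continuous fun p : Conf i M × Conf j N => Sum.inr (p.2.1 n)
    exact continuous_inr.comp ((continuous_apply n).comp
      (continuous_subtype_val.comp continuous_snd))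

lemma continuous_Phi (k : ℕ) (M N : Type*) [TopologicalSpace M] [TopologicalSpace N] :
    Continuous (Phi k M N) := by
  apply continuous_sigma
  rintro ⟨⟨i, j⟩, hij⟩
  exact continuous_quot_lift (F_sound hij) (continuous_F (M := M) (N := N) hij)

lemma continuous_getLeftSub :
    Continuous (fun s : {x : M ⊕ N // x.isLeft} => s.1.getLeft s.2) := by
  rw [continuous_def]
  intro V hV
  have hpre : (fun s : {x : M ⊕ N // x.isLeft} => s.1.getLeft s.2) ⁻¹' V
      = Subtype.val ⁻¹' (Sum.inl '' V) := by
    ext ⟨s, hs⟩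
    obtain ⟨m, rfl⟩ := Sum.isLeft_iff.mp hs
    simp [Sum.getLeft_inl]
  rw [hpre]
  exact continuous_subtype_val.isOpen_preimage _ (isOpenMap_inl V hV)

lemma continuous_getRightSub :
    Continuous (fun s : {x : M ⊕ N // x.isRight} => s.1.getRight s.2) := by
  rw [continuous_def]
  intro V hV
  have hpre : (fun s : {x : M ⊕ N // x.isRight} => s.1.getRight s.2) ⁻¹' V
      = Subtype.val ⁻¹' (Sum.inr '' V) := by
    ext ⟨s, hs⟩
    obtain ⟨n, rfl⟩ := Sum.isRight_iff.mp hs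
    simp [Sum.getRight_inr]
  rw [hpre]
  exact continuous_subtype_val.isOpen_preimage _ (isOpenMap_inr V hV)

lemma continuous_aOf (S : Finset (Fin k)) :
    Continuous fun u : {f : Conf k (M ⊕ N) // Sset f = S} => aOf S u := by
  apply Continuous.subtype_mk
  apply continuous_pi
  intro m
  have hc : Continuous fun u : {f : Conf k (M ⊕ N) // Sset f = S} =>
      (⟨u.1.1 (phiS S (Sum.inl m)), isLeft_of_mem u.2 (phiS_inl S m)⟩ :
        {x : M ⊕ N // x.isLeft}) :=
    Continuous.subtype_mk ((continuous_apply (phiS S (Sum.inl m))).comp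
      (continuous_subtype_val.comp (continuous_subtype_val (p := fun f : Conf k (M ⊕ N) => Sset f = S)))) _
  exact continuous_getLeftSub.comp hc

lemma continuous_bOf (S : Finset (Fin k)) :
    Continuous fun u : {f : Conf k (M ⊕ N) // Sset f = S} => bOf S u := by
  apply Continuous.subtype_mk
  apply continuous_pi
  intro n
  have hc : Continuous fun u : {f : Conf k (M ⊕ N) // Sset f = S} =>
      (⟨u.1.1 (phiS S (Sum.inr n)), isRight_of_not_mem u.2 (phiS_inr S n)⟩ :
        {x : M ⊕ N // x.isRight}) :=
    Continuous.subtype_mk ((continuous_apply (phiS S (Sum.inr n))).comp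
      (continuous_subtype_val.comp (continuous_subtype_val (p := fun f : Conf k (M ⊕ N) => Sset f = S)))) _
  exact continuous_getRightSub.comp hc

lemma continuous_PsiS (S : Finset (Fin k)) :
    Continuous (PsiS S : {f : Conf k (M ⊕ N) // Sset f = S} → _) :=
  continuous_sigmaMk.comp (continuous_quot_mk.comp
    ((continuous_aOf S).prodMk ((continuous_bOf S).prodMk continuous_const)))

lemma continuous_Psi (k : ℕ) (M N : Type*) [TopologicalSpace M] [TopologicalSpace N] :
    Continuous (Psi : Conf k (M ⊕ N) → _) := by
  rw [continuous_iff_continuousAt]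
  intro f₀
  have hχ : Continuous fun f : Conf k (M ⊕ N) => fun x => (f.1 x).isLeft := by
    apply continuous_pi
    intro x
    rw [continuous_discrete_rng]
    intro bb
    cases bb with
    | false =>
      have : (fun f : Conf k (M ⊕ N) => (f.1 x).isLeft) ⁻¹' {false}
          = (fun f : Conf k (M ⊕ N) => f.1 x) ⁻¹' (Set.range Sum.inr) := by
        ext f
        simp only [Set.mem_preimage, Set.mem_singleton_iff, Set.mem_range]
        cases hfx : f.1 x <;> simp [hfx]
      rw [this]
      exact (((continuous_apply x).comp continuous_subtype_val)).isOpen_preimage _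
        isOpen_range_inr
    | true =>
      have : (fun f : Conf k (M ⊕ N) => (f.1 x).isLeft) ⁻¹' {true}
          = (fun f : Conf k (M ⊕ N) => f.1 x) ⁻¹' (Set.range Sum.inl) := by
        ext f
        simp only [Set.mem_preimage, Set.mem_singleton_iff, Set.mem_range]
        cases hfx : f.1 x <;> simp [hfx]
      rw [this]
      exact (((continuous_apply x).comp continuous_subtype_val)).isOpen_preimage _
        isOpen_range_inl
  have hUopen : IsOpen {f : Conf k (M ⊕ N) | Sset f = Sset f₀} := by
    have hUeq : {f : Conf k (M ⊕ N) | Sset f = Sset f₀}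
        = (fun f : Conf k (M ⊕ N) => fun x => (f.1 x).isLeft) ⁻¹'
          {fun x => (f₀.1 x).isLeft} := by
      ext f
      simp only [Set.mem_setOf_eq, Set.mem_preimage, Set.mem_singleton_iff]
      constructor
      · intro hS
        funext x
        rw [Bool.eq_iff_iff, ← mem_Sset, ← mem_Sset, hS]
      · intro hS
        ext x
        rw [mem_Sset, mem_Sset, congrFun hS x]
    rw [hUeq]
    exact hχ.isOpen_preimage _ (isOpen_discrete _)
  apply ContinuousOn.continuousAt _ (hUopen.mem_nhds rfl)
  rw [continuousOn_iff_continuous_restrict]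
  have hres : Set.domRestrict {f : Conf k (M ⊕ N) | Sset f = Sset f₀} Psi
      = PsiS (Sset f₀) ∘ (fun u : {f : Conf k (M ⊕ N) // Sset f = Sset f₀} => u) := by
    funext u
    exact Psi_eq u.1 u.2
  rw [hres]
  exact (continuous_PsiS (Sset f₀)).comp continuous_id

end Continuity

end ConfDisjointAux

/-- The configuration spaces of a disjoint union decompose: `Conf_k(M ⊔ N)` is
homeomorphic to the disjoint union over `i + j = k` of
`Conf_i(M) × Conf_j(N) ×_{Σ_i × Σ_j} Σ_k`. -/
theorem conf_disjoint_union_homeomorph (k : ℕ) (M N : Type*) [TopologicalSpace M]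
    [TopologicalSpace N] :
    Nonempty
      (Conf k (M ⊕ N) ≃ₜ
        Σ p : {p : ℕ × ℕ // p.1 + p.2 = k}, Quot (confRel p.2 M N)) := by
  classical
  let e := Equiv.ofBijective (ConfDisjointAux.Phi k M N)
    ⟨ConfDisjointAux.Phi_injective k M N,
      fun f => ⟨ConfDisjointAux.Psi f, ConfDisjointAux.Phi_Psi f⟩⟩
  have hsymm : ⇑e.symm = ConfDisjointAux.Psi := by
    funext f
    apply ConfDisjointAux.Phi_injective k M N
    rw [ConfDisjointAux.Phi_Psi]
    exact Equiv.apply_symm_apply e f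
  exact ⟨Homeomorph.symm ⟨e, ConfDisjointAux.continuous_Phi k M N, by
    show Continuous ⇑e.symm
    rw [hsymm]
    exact ConfDisjointAux.continuous_Psi k M N⟩⟩
end

section
/- Let M and N be topological manifolds. The collection Disk(M) × Disk(N) of open sets of M × N is a complete Weiss cover: it is a Weiss cover, and for any finite subcollection {U_1 × V_1, …, U_s × V_s}, the collection contains a Weiss cover of the intersection ∩_{j=1}^s (U_j × V_j). -/
open Set

/-- `U` belongs to `Disk(M)` for an `m`-manifold `M`: `U` is open and homeomorphic to a
finite disjoint union of copies of `ℝ^m`. -/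
def IsDiskIn (m : ℕ) {M : Type*} [TopologicalSpace M] (U : Set M) : Prop :=
  IsOpen U ∧ ∃ k : ℕ, Nonempty (U ≃ₜ Fin k × EuclideanSpace ℝ (Fin m))

/-- `𝒰` is a Weiss cover of the subset `A ⊆ X` (by members contained in `A`): every
finite subset of `A` lies in some member of `𝒰` contained in `A`. -/
def IsWeissCoverOn {X : Type*} (𝒰 : Set (Set X)) (A : Set X) : Prop :=
  ∀ S : Set X, S.Finite → S ⊆ A → ∃ W ∈ 𝒰, W ⊆ A ∧ S ⊆ W

/-- `𝒰` is a complete Weiss cover of `X`: it is a Weiss cover of `X`, and it contains a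
Weiss cover of the intersection of any finite subfamily. -/
def IsCompleteWeissCover {X : Type*} (𝒰 : Set (Set X)) : Prop :=
  IsWeissCoverOn 𝒰 Set.univ ∧
    ∀ 𝒰₀ ⊆ 𝒰, 𝒰₀.Finite → IsWeissCoverOn 𝒰 (⋂₀ 𝒰₀)

section Aux

variable {m : ℕ} {M : Type*} [TopologicalSpace M] [T2Space M]
  [ChartedSpace (EuclideanSpace ℝ (Fin m)) M]

/-- Around any point of an open set in a manifold there is an embedded copy of `ℝ^m`
inside the open set. -/
lemma exists_isOpenEmbedding_mem {A : Set M} (hA : IsOpen A) {p : M} (hp : p ∈ A) :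
    ∃ f : EuclideanSpace ℝ (Fin m) → M,
      Topology.IsOpenEmbedding f ∧ p ∈ range f ∧ range f ⊆ A := by
  set E := EuclideanSpace ℝ (Fin m)
  set φ := chartAt E p with hφ
  have hps : p ∈ φ.source := mem_chart_source E p
  have hT : IsOpen (φ.target ∩ φ.symm ⁻¹' A) := φ.isOpen_inter_preimage_symm hA
  have hpT : φ p ∈ φ.target ∩ φ.symm ⁻¹' A := by
    refine ⟨φ.map_source hps, ?_⟩
    simp only [mem_preimage, φ.left_inv hps]
    exact hp
  obtain ⟨ε, hε, hball⟩ := Metric.isOpen_iff.mp hT _ hpT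
  set ψ := (OpenPartialHomeomorph.univBall (φ p) ε).trans φ.symm with hψ
  have hballtgt : Metric.ball (φ p) ε ⊆ (OpenPartialHomeomorph.univBall (φ p) ε).target :=
    OpenPartialHomeomorph.ball_subset_univBall_target _ _
  have htgt : (OpenPartialHomeomorph.univBall (φ p) ε).target = Metric.ball (φ p) ε :=
    OpenPartialHomeomorph.univBall_target _ hε
  have hsrc : ψ.source = univ := by
    rw [hψ, OpenPartialHomeomorph.trans_source, OpenPartialHomeomorph.univBall_source,
      univ_inter, eq_univ_iff_forall]
    intro x
    have : (OpenPartialHomeomorph.univBall (φ p) ε) x ∈ (OpenPartialHomeomorph.univBall (φ p) ε).target :=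
      OpenPartialHomeomorph.map_source _ (by simp)
    rw [htgt] at this
    exact (hball this).1
  refine ⟨ψ, ψ.to_isOpenEmbedding hsrc, ?_, ?_⟩
  · have : p ∈ ψ.target := by
      rw [hψ, OpenPartialHomeomorph.trans_target]
      refine ⟨by simpa using hps, ?_⟩
      simp only [mem_preimage, OpenPartialHomeomorph.symm_symm, htgt]
      exact Metric.mem_ball_self hε
    rw [← image_univ, ← hsrc, ψ.image_source_eq_target]
    exact this
  · rw [← image_univ, ← hsrc, ψ.image_source_eq_target, hψ, OpenPartialHomeomorph.trans_target]
    rintro x ⟨hx1, hx2⟩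
    simp only [mem_preimage, OpenPartialHomeomorph.symm_symm, htgt] at hx2
    have hx1' : x ∈ φ.source := by simpa using hx1
    have := (hball hx2).2
    simpa [φ.left_inv hx1'] using this

/-- Any finite subset of an open set in a manifold is contained in a disk inside the open set. -/
lemma exists_disk_subset {A : Set M} (hA : IsOpen A) {S : Set M} (hS : S.Finite)
    (hSA : S ⊆ A) :
    ∃ U : Set M, IsDiskIn m U ∧ U ⊆ A ∧ S ⊆ U := by
  classical
  set E := EuclideanSpace ℝ (Fin m)
  obtain ⟨W, hW, hWd⟩ := hS.t2_separation
  have key : ∀ p : S, ∃ f : E → M,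
      Topology.IsOpenEmbedding f ∧ (p : M) ∈ range f ∧ range f ⊆ A ∩ W p := by
    rintro ⟨p, hp⟩
    exact exists_isOpenEmbedding_mem (hA.inter (hW p).2) ⟨hSA hp, (hW p).1⟩
  choose f hf hfm hfs using key
  haveI := hS.fintype
  set k := Fintype.card S
  set e : Fin k ≃ S := (Fintype.equivFin S).symm
  set F : Fin k × E → M := fun q => f (e q.1) q.2 with hF
  have hcont : Continuous F := by
    rw [continuous_iff_continuousAt]
    rintro ⟨i, x⟩
    have hnb : {i} ×ˢ (univ : Set E) ∈ nhds (i, x) :=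
      prod_mem_nhds (by simp) Filter.univ_mem
    refine ContinuousAt.congr ((hf (e i)).continuous.comp continuous_snd).continuousAt ?_
    filter_upwards [hnb] with q hq
    rcases q with ⟨j, y⟩
    obtain rfl : j = i := by simpa using hq.1
    rfl
  have hinj : Function.Injective F := by
    rintro ⟨i, x⟩ ⟨j, y⟩ h
    have hij : i = j := by
      by_contra hne
      have hpq : (e i : M) ≠ (e j : M) := by
        intro hc
        exact hne (e.injective (Subtype.ext hc))
      have hd := hWd (e i).2 (e j).2 hpq
      have h1 : F (i, x) ∈ W (e i) := (hfs (e i) ⟨x, rfl⟩).2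
      have h2 : F (j, y) ∈ W (e j) := (hfs (e j) ⟨y, rfl⟩).2
      rw [h] at h1
      exact (hd.le_bot ⟨h1, h2⟩ : _)
    subst hij
    have := (hf (e i)).injective (h : f (e i) x = f (e i) y)
    exact Prod.ext rfl this
  have hopen : IsOpenMap F := by
    intro O hO
    have : F '' O = ⋃ i : Fin k, f (e i) '' {x | (i, x) ∈ O} := by
      ext z
      constructor
      · rintro ⟨⟨i, x⟩, hq, rfl⟩
        exact mem_iUnion.2 ⟨i, x, hq, rfl⟩
      · rintro hz
        obtain ⟨i, x, hx, rfl⟩ := mem_iUnion.1 hz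
        exact ⟨(i, x), hx, rfl⟩
    rw [this]
    refine isOpen_iUnion fun i => (hf (e i)).isOpenMap _ ?_
    exact hO.preimage (Continuous.prodMk_right i)
  have hFemb : Topology.IsOpenEmbedding F :=
    Topology.IsOpenEmbedding.of_continuous_injective_isOpenMap hcont hinj hopen
  refine ⟨range F, ⟨hFemb.isOpen_range, k, ⟨hFemb.isEmbedding.toHomeomorph.symm⟩⟩,
    ?_, ?_⟩
  · rintro z ⟨⟨i, x⟩, rfl⟩
    exact (hfs (e i) ⟨x, rfl⟩).1
  · intro p hp
    obtain ⟨x, hx⟩ := hfm ⟨p, hp⟩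
    exact ⟨(e.symm ⟨p, hp⟩, x), by simp [hF, hx]⟩

end Aux

/-- The disk-product family is a Weiss cover of any open box `A ×ˢ B`. -/
lemma disk_prod_weiss_on {m n : ℕ} {M N : Type*} [TopologicalSpace M]
    [T2Space M] [ChartedSpace (EuclideanSpace ℝ (Fin m)) M] [TopologicalSpace N]
    [T2Space N] [ChartedSpace (EuclideanSpace ℝ (Fin n)) N]
    {A : Set M} {B : Set N} (hA : IsOpen A) (hB : IsOpen B) :
    IsWeissCoverOn
      {W : Set (M × N) | ∃ U V, IsDiskIn m U ∧ IsDiskIn n V ∧ W = U ×ˢ V} (A ×ˢ B) := by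
  intro S hS hSA
  have h1 : Prod.fst '' S ⊆ A := by
    rintro _ ⟨p, hp, rfl⟩; exact (hSA hp).1
  have h2 : Prod.snd '' S ⊆ B := by
    rintro _ ⟨p, hp, rfl⟩; exact (hSA hp).2
  obtain ⟨U, hU, hUA, hSU⟩ := exists_disk_subset (m := m) hA (hS.image Prod.fst) h1
  obtain ⟨V, hV, hVB, hSV⟩ := exists_disk_subset (m := n) hB (hS.image Prod.snd) h2
  refine ⟨U ×ˢ V, ⟨U, V, hU, hV, rfl⟩, prod_mono hUA hVB, ?_⟩
  intro p hp
  exact ⟨hSU ⟨p, hp, rfl⟩, hSV ⟨p, hp, rfl⟩⟩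

/-- For topological manifolds `M` and `N`, the collection
`Disk(M) × Disk(N) = {U × V : U ∈ Disk(M), V ∈ Disk(N)}` is a complete Weiss cover of
`M × N`. -/
theorem disk_prod_complete_weiss_cover (m n : ℕ) (M N : Type*) [TopologicalSpace M]
    [T2Space M] [ChartedSpace (EuclideanSpace ℝ (Fin m)) M] [TopologicalSpace N]
    [T2Space N] [ChartedSpace (EuclideanSpace ℝ (Fin n)) N] :
    IsCompleteWeissCover
      {W : Set (M × N) | ∃ U V, IsDiskIn m U ∧ IsDiskIn n V ∧ W = U ×ˢ V} := by
  classical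
  constructor
  · have := disk_prod_weiss_on (m := m) (n := n) (M := M) (N := N)
      isOpen_univ isOpen_univ
    simpa [univ_prod_univ] using this
  · intro 𝒰₀ hsub h𝒰₀
    have key : ∀ W : Set (M × N), ∃ P : Set M × Set N,
        W ∈ 𝒰₀ → IsDiskIn m P.1 ∧ IsDiskIn n P.2 ∧ W = P.1 ×ˢ P.2 := by
      intro W
      by_cases hW : W ∈ 𝒰₀
      · obtain ⟨U, V, hU, hV, hUV⟩ := hsub hW
        exact ⟨(U, V), fun _ => ⟨hU, hV, hUV⟩⟩
      · exact ⟨(∅, ∅), fun h => absurd h hW⟩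
    choose P hP using key
    set A : Set M := ⋂ W ∈ 𝒰₀, (P W).1 with hA
    set B : Set N := ⋂ W ∈ 𝒰₀, (P W).2 with hB
    have hAo : IsOpen A := h𝒰₀.isOpen_biInter fun W hW => ((hP W hW).1).1
    have hBo : IsOpen B := h𝒰₀.isOpen_biInter fun W hW => ((hP W hW).2.1).1
    have heq : ⋂₀ 𝒰₀ = A ×ˢ B := by
      ext ⟨x, y⟩
      simp only [mem_sInter, mem_prod, hA, hB, mem_iInter]
      constructor
      · intro h
        constructor
        · intro W hW
          have := h W hW
          rw [(hP W hW).2.2] at this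
          exact this.1
        · intro W hW
          have := h W hW
          rw [(hP W hW).2.2] at this
          exact this.2
      · rintro ⟨h1, h2⟩ W hW
        rw [(hP W hW).2.2]
        exact ⟨h1 W hW, h2 W hW⟩
    rw [heq]
    exact disk_prod_weiss_on hAo hBo
end

section
/- For any topological manifold M, the collection Disk(M) of open subsets homeomorphic to finite disjoint unions of Euclidean spaces is a complete Weiss cover of M. -/
open Set

/-- Every point of an open set `A` in a charted space has an open neighborhood inside `A`
homeomorphic to Euclidean space. -/
lemma exists_euclidean_nhd (m : ℕ) {M : Type*} [TopologicalSpace M]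
    [ChartedSpace (EuclideanSpace ℝ (Fin m)) M] {A : Set M} (hA : IsOpen A) {x : M}
    (hx : x ∈ A) :
    ∃ V : Set M, IsOpen V ∧ x ∈ V ∧ V ⊆ A ∧
      Nonempty (V ≃ₜ EuclideanSpace ℝ (Fin m)) := by
  set E := EuclideanSpace ℝ (Fin m)
  set φ := chartAt E x with hφ
  have hxs : x ∈ φ.source := mem_chart_source E x
  have ht_open : IsOpen (φ '' (φ.source ∩ A)) :=
    φ.isOpen_image_of_subset_source (φ.open_source.inter hA) inter_subset_left
  have hxt : φ x ∈ φ '' (φ.source ∩ A) := ⟨x, ⟨hxs, hx⟩, rfl⟩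
  obtain ⟨r, hr, hball⟩ := Metric.isOpen_iff.1 ht_open (φ x) hxt
  set B := OpenPartialHomeomorph.univBall (φ x) r with hB
  have hBt : B.target = Metric.ball (φ x) r := OpenPartialHomeomorph.univBall_target _ hr
  set u := φ.trans B.symm with hu
  have husrc : u.source = φ.source ∩ φ ⁻¹' (Metric.ball (φ x) r) := by
    rw [hu, OpenPartialHomeomorph.trans_source, OpenPartialHomeomorph.symm_source, hBt]
  have ht_sub : φ '' (φ.source ∩ A) ⊆ φ.target := by
    rw [← φ.image_source_eq_target]; exact image_mono inter_subset_left
  have hutgt : u.target = univ := by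
    rw [hu, OpenPartialHomeomorph.trans_target, OpenPartialHomeomorph.symm_symm,
      OpenPartialHomeomorph.symm_target, OpenPartialHomeomorph.univBall_source, univ_inter]
    refine eq_univ_of_forall fun y => ?_
    have : B y ∈ B.target := B.map_source (by rw [hB, OpenPartialHomeomorph.univBall_source]; exact mem_univ y)
    exact ht_sub (hball (hBt ▸ this))
  refine ⟨u.source, u.open_source, ?_, ?_, ?_⟩
  · rw [husrc]
    exact ⟨hxs, Metric.mem_ball_self hr⟩
  · intro y hy
    rw [husrc] at hy
    obtain ⟨z, hz, hzy⟩ := hball hy.2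
    have : z = y := φ.injOn hz.1 hy.1 hzy
    exact this ▸ hz.2
  · refine ⟨u.toHomeomorphSourceTarget.trans ?_⟩
    exact (Homeomorph.setCongr hutgt).trans (Homeomorph.Set.univ E)

/-- A finite disjoint union of open sets each homeomorphic to `ℝ^m` is a disk. -/
lemma isDiskIn_iUnion (m : ℕ) {M : Type*} [TopologicalSpace M] (k : ℕ)
    (U : Fin k → Set M) (hopen : ∀ i, IsOpen (U i))
    (hdisj : Pairwise (Function.onFun Disjoint U))
    (hhomeo : ∀ i, Nonempty ((U i : Set M) ≃ₜ EuclideanSpace ℝ (Fin m))) :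
    IsDiskIn m (⋃ i, U i) := by
  set E := EuclideanSpace ℝ (Fin m)
  have h : ∀ i, (U i : Set M) ≃ₜ E := fun i => Classical.choice (hhomeo i)
  set f : Fin k → E → M := fun i y => ((h i).symm y : M) with hf
  have hfe : ∀ i, Topology.IsOpenEmbedding (f i) := fun i =>
    (hopen i).isOpenEmbedding_subtypeVal.comp (h i).symm.isOpenEmbedding
  have hmem : ∀ i y, f i y ∈ U i := fun i y => ((h i).symm y).2
  set g : Fin k × E → M := fun p => f p.1 p.2 with hg
  have hcont : Continuous g := by
    have : Continuous (Function.uncurry f) :=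
      continuous_prod_of_discrete_left.2 fun i => (hfe i).continuous
    exact this
  have hinj : Function.Injective g := by
    rintro ⟨i, y⟩ ⟨j, z⟩ hyz
    rcases eq_or_ne i j with rfl | hij
    · exact congrArg _ ((hfe i).injective hyz)
    · have h1 : f i y ∈ U j := by
        rw [show f i y = f j z from hyz]; exact hmem j z
      exact absurd h1 (Set.disjoint_left.1 (hdisj hij) (hmem i y))
  have hopenmap : IsOpenMap g := by
    intro W hW
    have himg : g '' W = ⋃ i, f i '' {y | (i, y) ∈ W} := by
      ext z
      simp only [mem_image, mem_iUnion, Prod.exists, mem_setOf_eq]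
      exact Iff.rfl
    rw [himg]
    exact isOpen_iUnion fun i =>
      (hfe i).isOpenMap _ (hW.preimage (Continuous.prodMk_right i))
  have hemb : Topology.IsOpenEmbedding g :=
    Topology.IsOpenEmbedding.of_continuous_injective_isOpenMap hcont hinj hopenmap
  have hrange : range g = ⋃ i, U i := by
    ext z
    simp only [mem_range, mem_iUnion, Prod.exists]
    constructor
    · rintro ⟨i, y, rfl⟩; exact ⟨i, hmem i y⟩
    · rintro ⟨i, hi⟩
      exact ⟨i, (h i) ⟨z, hi⟩, by simp [hg, hf]⟩
  refine ⟨isOpen_iUnion hopen, k, ?_⟩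
  exact ⟨(Homeomorph.setCongr hrange.symm).trans
    (hemb.isEmbedding.toHomeomorph).symm⟩

/-- Any finite subset of an open set `A` in a manifold is contained in a disk inside `A`. -/
lemma exists_disk_of_finite (m : ℕ) {M : Type*} [TopologicalSpace M] [T2Space M]
    [ChartedSpace (EuclideanSpace ℝ (Fin m)) M] {A : Set M} (hA : IsOpen A)
    {S : Set M} (hS : S.Finite) (hSA : S ⊆ A) :
    ∃ W : Set M, IsDiskIn m W ∧ W ⊆ A ∧ S ⊆ W := by
  obtain ⟨O, hO, hOdisj⟩ := hS.t2_separation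
  have key : ∀ x : S, ∃ V : Set M, IsOpen V ∧ (x : M) ∈ V ∧ V ⊆ A ∩ O x ∧
      Nonempty (V ≃ₜ EuclideanSpace ℝ (Fin m)) := by
    rintro ⟨x, hx⟩
    exact exists_euclidean_nhd m (hA.inter (hO x).2) ⟨hSA hx, (hO x).1⟩
  choose V hVopen hVmem hVsub hVhomeo using key
  haveI := hS.fintype
  set e : S ≃ Fin (Fintype.card S) := Fintype.equivFin S with he
  set U : Fin (Fintype.card S) → Set M := fun i => V (e.symm i) with hU
  have hdisj : Pairwise (Function.onFun Disjoint U) := by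
    intro i j hij
    have hne : ((e.symm i : M)) ≠ ((e.symm j : M)) := by
      intro hcoe
      exact hij (by simpa using congrArg e (Subtype.ext hcoe))
    exact Set.disjoint_of_subset ((hVsub _).trans inter_subset_right)
      ((hVsub _).trans inter_subset_right)
      (hOdisj (e.symm i).2 (e.symm j).2 hne)
  refine ⟨⋃ i, U i, isDiskIn_iUnion m _ U (fun i => hVopen _) hdisj (fun i => hVhomeo _),
    ?_, ?_⟩
  · exact iUnion_subset fun i => (hVsub _).trans inter_subset_left
  · intro x hx
    exact mem_iUnion.2 ⟨e ⟨x, hx⟩, by simpa [hU] using hVmem ⟨x, hx⟩⟩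

/-- For any topological manifold `M`, the collection `Disk(M)` of open subsets
homeomorphic to finite disjoint unions of Euclidean spaces is a complete Weiss cover of
`M`. -/
theorem disk_complete_weiss_cover (m : ℕ) (M : Type*) [TopologicalSpace M] [T2Space M]
    [ChartedSpace (EuclideanSpace ℝ (Fin m)) M] :
    IsCompleteWeissCover {U : Set M | IsDiskIn m U} := by
  constructor
  · intro S hS hSA
    obtain ⟨W, hW, hWA, hSW⟩ := exists_disk_of_finite m isOpen_univ hS hSA
    exact ⟨W, hW, hWA, hSW⟩
  · intro 𝒰₀ hsub hfin S hS hSA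
    have hAopen : IsOpen (⋂₀ 𝒰₀) := hfin.isOpen_sInter fun U hU => (hsub hU).1
    obtain ⟨W, hW, hWA, hSW⟩ := exists_disk_of_finite m hAopen hS hSA
    exact ⟨W, hW, hWA, hSW⟩
end

section
/- For symmetric sequences X and Y of topological spaces (or sets), the matrix tensor product (X □ Y)(k) = ⨆_{ij=k} (X(i) × Y(j)) ×_{Σ_i × Σ_j} Σ_k, where Σ_i × Σ_j acts on Σ_k via the homomorphism ν_{i,j}: Σ_i × Σ_j → Σ_{ij} given by ν(σ,τ)(a,b) = (σ(a),τ(b)) under the identification {1,…,ij} ≅ {1,…,i} × {1,…,j}, defines a monoidal product on symmetric sequences whose unit is the symmetric sequence concentrated in arity 1 with value a point. -/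
open Equiv

/-- A symmetric sequence of types: a collection `X(k)` with right `Σ_k`-actions (the
action laws are asserted separately by `IsRightAction`). -/
structure SymSeq where
  obj : ℕ → Type
  act : ∀ k, obj k → Equiv.Perm (Fin k) → obj k

/-- The maps `act` define a right action of `Σ_k` on `X(k)` for each `k`. -/
def IsRightAction (X : SymSeq) : Prop :=
  (∀ k x, X.act k x 1 = x) ∧ ∀ k x g h, X.act k x (g * h) = X.act k (X.act k x g) h

/-- The homomorphism `ν_{i,j} : Σ_i × Σ_j → Σ_{ij}`, `ν(σ,τ)(a,b) = (σ(a),τ(b))`, under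
the identification `{1,…,ij} ≅ {1,…,i} × {1,…,j}`. -/
def nu (i j : ℕ) (σ : Perm (Fin i)) (τ : Perm (Fin j)) : Perm (Fin (i * j)) :=
  (Equiv.permCongr finProdFinEquiv) (σ.prodCongr τ)

/-- The relation identifying `((x·σ, y·τ), π)` with `((x, y), ν_{i,j}(σ,τ)·π)`. -/
def mtRel (X Y : SymSeq) (i j k : ℕ) (h : i * j = k) :
    (X.obj i × Y.obj j × Perm (Fin k)) → (X.obj i × Y.obj j × Perm (Fin k)) → Prop :=
  fun a b => ∃ (σ : Perm (Fin i)) (τ : Perm (Fin j)),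
    b.1 = X.act i a.1 σ ∧ b.2.1 = Y.act j a.2.1 τ ∧
      a.2.2 = (finCongr h).permCongr (nu i j σ τ) * b.2.2

/-- The matrix tensor product of symmetric sequences:
`(X □ Y)(k) = ⨆_{ij=k} (X(i) × Y(j)) ×_{Σ_i × Σ_j} Σ_k`, with `Σ_k` acting on the right
on the last factor. -/
def matProd (X Y : SymSeq) : SymSeq where
  obj k := Σ p : {p : ℕ × ℕ // p.1 * p.2 = k}, Quot (mtRel X Y p.1.1 p.1.2 k p.2)
  act k x g :=
    ⟨x.1, Quot.map (fun a => (a.1, a.2.1, a.2.2 * g))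
      (fun a b hab => by
        obtain ⟨σ, τ, h1, h2, h3⟩ := hab
        exact ⟨σ, τ, h1, h2, by simp only []; rw [h3, mul_assoc]⟩) x.2⟩

/-- The unit symmetric sequence: a point in arity `1` and empty otherwise. -/
def unitSeq : SymSeq where
  obj k := if k = 1 then PUnit else PEmpty
  act _ x _ := x

/- ############ AUX ############## -/


lemma permCongr_mul {α β : Type*} (e : α ≃ β) (P Q : Perm α) :
    e.permCongr (P * Q) = e.permCongr P * e.permCongr Q := by
  ext x; simp [permCongr_apply, Perm.mul_apply]

lemma permCongr_finCongr_self {n : ℕ} (h : n = n) (P : Perm (Fin n)) :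
    (finCongr h).permCongr P = P := by
  ext x; simp [permCongr_apply]

lemma nu_apply (i j : ℕ) (σ : Perm (Fin i)) (τ : Perm (Fin j)) (x : Fin (i*j)) :
    ((nu i j σ τ) x : ℕ) = (τ x.modNat : ℕ) + j * (σ x.divNat : ℕ) := by
  simp [nu, permCongr_apply, finProdFinEquiv]

lemma nu_mul (i j : ℕ) (σ1 σ2 : Perm (Fin i)) (τ1 τ2 : Perm (Fin j)) :
    nu i j (σ1 * σ2) (τ1 * τ2) = nu i j σ1 τ1 * nu i j σ2 τ2 := by
  ext x
  simp [nu, permCongr_apply, Perm.mul_apply]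

lemma nu_one (i j : ℕ) : nu i j 1 1 = 1 := by
  ext x
  simp [nu, permCongr_apply, prodCongr_apply, Perm.one_apply]
  exact Nat.mod_add_div _ _

lemma nu_assoc (i j n : ℕ) (σ : Perm (Fin i)) (τ : Perm (Fin j)) (ρ : Perm (Fin n)) :
    (finCongr (Nat.mul_assoc i j n)).permCongr (nu (i*j) n (nu i j σ τ) ρ)
      = nu i (j*n) σ (nu j n τ ρ) := by
  ext x
  set y : Fin ((i*j)*n) := Fin.cast (Nat.mul_assoc i j n).symm x with hy
  have hA : y.modNat = x.modNat.modNat := by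
    apply Fin.ext
    simp only [Fin.modNat, hy, Fin.coe_cast]
    exact (Nat.mod_mod_of_dvd _ (dvd_mul_left n j)).symm
  have hB : y.divNat.modNat = x.modNat.divNat := by
    apply Fin.ext
    simp only [Fin.modNat, Fin.divNat, hy, Fin.coe_cast]
    exact (Nat.mod_mul_left_div_self _ _ _).symm
  have hC : y.divNat.divNat = x.divNat := by
    apply Fin.ext
    simp only [Fin.modNat, Fin.divNat, hy, Fin.coe_cast]
    rw [Nat.div_div_eq_div_mul, mul_comm n j]
  have : (((finCongr (Nat.mul_assoc i j n)).permCongr (nu (i*j) n (nu i j σ τ) ρ)) x : ℕ)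
      = ((nu (i*j) n (nu i j σ τ) ρ) y : ℕ) := by
    simp [permCongr_apply, hy]
  rw [this, nu_apply, nu_apply, nu_apply, nu_apply, hA, hB, hC]
  ring

/-- `nu` transported to `Perm (Fin k)` along `i * j = k`. -/
def nuK {i j k : ℕ} (h : i * j = k) (σ : Perm (Fin i)) (τ : Perm (Fin j)) : Perm (Fin k) :=
  (finCongr h).permCongr (nu i j σ τ)

lemma nuK_self {i j : ℕ} (h : i * j = i * j) (σ : Perm (Fin i)) (τ : Perm (Fin j)) :
    nuK h σ τ = nu i j σ τ := permCongr_finCongr_self _ _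

lemma nuK_mul {i j k : ℕ} (h : i * j = k) (σ1 σ2 : Perm (Fin i)) (τ1 τ2 : Perm (Fin j)) :
    nuK h (σ1 * σ2) (τ1 * τ2) = nuK h σ1 τ1 * nuK h σ2 τ2 := by
  rw [nuK, nu_mul, _root_.permCongr_mul]; rfl

lemma nuK_one {i j k : ℕ} (h : i * j = k) : nuK h 1 1 = 1 := by
  rw [nuK, nu_one]; ext x; simp [permCongr_apply]

lemma nuK_mul_left {i j k : ℕ} (h : i * j = k) (σ1 σ2 : Perm (Fin i)) :
    nuK h (σ1 * σ2) 1 = nuK h σ1 1 * nuK h σ2 1 := by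
  simpa using nuK_mul h σ1 σ2 1 1

lemma nuK_mul_right {i j k : ℕ} (h : i * j = k) (τ1 τ2 : Perm (Fin j)) :
    nuK h 1 (τ1 * τ2) = nuK h 1 τ1 * nuK h 1 τ2 := by
  simpa using nuK_mul h 1 1 τ1 τ2

lemma permCongr_finCongr_trans {a b c : ℕ} (h1 : a = b) (h2 : b = c) (P : Perm (Fin a)) :
    (finCongr h2).permCongr ((finCongr h1).permCongr P)
      = (finCongr (h1.trans h2)).permCongr P := by
  subst h1; subst h2
  simp only [permCongr_finCongr_self]

lemma nuK_nuK {i j n m p k : ℕ} (hij : i * j = m) (hmn : m * n = k) (hjn : j * n = p)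
    (hip : i * p = k) (σ : Perm (Fin i)) (τ : Perm (Fin j)) (ρ : Perm (Fin n)) :
    nuK hmn (nuK hij σ τ) ρ = nuK hip σ (nuK hjn τ ρ) := by
  subst hij; subst hjn; subst hmn
  rw [nuK_self, nuK_self]
  show _ = (finCongr hip).permCongr (nu i (j*n) σ (nu j n τ ρ))
  rw [← nu_assoc, permCongr_finCongr_trans, permCongr_finCongr_self]

lemma nuK_unit_left {k : ℕ} (h : 1 * k = k) (σ : Perm (Fin 1)) (τ : Perm (Fin k)) :
    nuK h σ τ = τ := by
  ext x
  show (((finCongr h) ((nu 1 k σ τ) ((finCongr h).symm x))) : ℕ) = (τ x : ℕ)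
  rw [finCongr_apply, Fin.coe_cast, nu_apply]
  have h0 : ((σ ((finCongr h).symm x).divNat : Fin 1) : ℕ) = 0 :=
    Nat.lt_one_iff.mp (σ _).isLt
  have hm : (((finCongr h).symm x).modNat : Fin k) = x := by
    apply Fin.ext
    show ((finCongr h).symm x : ℕ) % k = (x : ℕ)
    have hv : ((finCongr h).symm x : ℕ) = (x : ℕ) := by simp
    rw [hv]; exact Nat.mod_eq_of_lt x.isLt
  rw [h0, hm]; ring

lemma nuK_unit_right {k : ℕ} (h : k * 1 = k) (σ : Perm (Fin k)) (τ : Perm (Fin 1)) :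
    nuK h σ τ = σ := by
  ext x
  show (((finCongr h) ((nu k 1 σ τ) ((finCongr h).symm x))) : ℕ) = (σ x : ℕ)
  rw [finCongr_apply, Fin.coe_cast, nu_apply]
  have h0 : ((τ ((finCongr h).symm x).modNat : Fin 1) : ℕ) = 0 :=
    Nat.lt_one_iff.mp (τ _).isLt
  have hd : (((finCongr h).symm x).divNat : Fin k) = x := by
    apply Fin.ext
    show ((finCongr h).symm x : ℕ) / 1 = (x : ℕ)
    have hv : ((finCongr h).symm x : ℕ) = (x : ℕ) := by simp
    rw [hv, Nat.div_one]
  rw [h0, hd]; ring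


def nuK' {i j k : ℕ} (h : i * j = k) := @nuK i j k h

/-- Eliminate an element of `unitSeq.obj i` for `i ≠ 1`. -/
def unitElim {i : ℕ} (h : i ≠ 1) (u : unitSeq.obj i) {C : Sort*} : C := by
  have he : unitSeq.obj i = PEmpty := by simp [unitSeq, h]
  exact (cast he u).elim

section Assoc

variable (X Y Z : SymSeq)

/-- Core of the associator: given a representative of the outer quotient on the left side. -/
def fwdCore (hX : IsRightAction X) (hY : IsRightAction Y) (hZ : IsRightAction Z)
    (m n k : ℕ) (hmn : m * n = k)
    (w : (matProd X Y).obj m) (z : Z.obj n) (π : Perm (Fin k)) :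
    (matProd X (matProd Y Z)).obj k :=
  match w with
  | ⟨⟨(i, j), hij⟩, q⟩ =>
    Quot.lift
      (fun a =>
        (⟨⟨(i, j * n), by rw [← Nat.mul_assoc, hij, hmn]⟩,
          Quot.mk _ (a.1,
            (⟨⟨(j, n), rfl⟩, Quot.mk _ (a.2.1, z, 1)⟩ : (matProd Y Z).obj (j * n)),
            nuK hmn a.2.2 1 * π)⟩ : (matProd X (matProd Y Z)).obj k))
      (by
        rintro ⟨x, y, ρ⟩ ⟨x', y', ρ'⟩ ⟨σ, τ, h1, h2, h3⟩
        dsimp only at h1 h2 h3 ⊢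
        refine congrArg _ (Quot.sound ?_)
        have h' : i * (j * n) = k := by rw [← Nat.mul_assoc, hij, hmn]
        refine ⟨σ, nuK rfl τ (1 : Perm (Fin n)), h1, ?_, ?_⟩
        · show (⟨⟨(j,n),rfl⟩, Quot.mk _ (y', z, 1)⟩ : (matProd Y Z).obj (j*n))
            = ⟨⟨(j,n),rfl⟩, Quot.mk _ (y, z, 1 * nuK rfl τ 1)⟩
          refine congrArg _ ?_
          rw [one_mul]
          exact (Quot.sound ⟨τ, 1, h2, (hZ.1 n z).symm, (mul_one _).symm⟩).symm
        · show nuK hmn ρ 1 * π = nuK h' σ (nuK rfl τ 1) * (nuK hmn ρ' 1 * π)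
          rw [h3, ← nuK_nuK hij hmn rfl h' σ τ 1]
          show nuK hmn (nuK hij σ τ * ρ') 1 * π = _
          rw [nuK_mul_left, mul_assoc])
      q

/-- The associator, forward direction. -/
def fwd (hX : IsRightAction X) (hY : IsRightAction Y) (hZ : IsRightAction Z) (k : ℕ) :
    (matProd (matProd X Y) Z).obj k → (matProd X (matProd Y Z)).obj k :=
  fun s =>
    match s with
    | ⟨⟨(m, n), hmn⟩, q⟩ =>
      Quot.lift (fun a => fwdCore X Y Z hX hY hZ m n k hmn a.1 a.2.1 a.2.2)
        (by
          rintro ⟨w, z, π⟩ ⟨w', z', π'⟩ ⟨σb, ρZ, h1, h2, h3⟩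
          dsimp only at h1 h2 h3 ⊢
          subst h1; subst h2
          obtain ⟨⟨⟨i, j⟩, hij⟩, q'⟩ := w
          induction q' using Quot.ind with
          | mk a =>
          obtain ⟨x, y, ρ⟩ := a
          show (⟨⟨(i, j * n), _⟩, Quot.mk _ (x, ⟨⟨(j,n), rfl⟩, Quot.mk _ (y, z, 1)⟩,
              nuK hmn ρ 1 * π)⟩ : (matProd X (matProd Y Z)).obj k)
            = ⟨⟨(i, j * n), _⟩, Quot.mk _ (x, ⟨⟨(j,n), rfl⟩, Quot.mk _ (y, Z.act n z ρZ, 1)⟩,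
              nuK hmn (ρ * σb) 1 * π')⟩
          have h' : i * (j * n) = k := by rw [← Nat.mul_assoc, hij, hmn]
          refine congrArg _ (Quot.sound ?_)
          refine ⟨1, nuK rfl (1 : Perm (Fin j)) ρZ, (hX.1 i x).symm, ?_, ?_⟩
          · show (⟨⟨(j,n),rfl⟩, Quot.mk _ (y, Z.act n z ρZ, 1)⟩ : (matProd Y Z).obj (j*n))
              = ⟨⟨(j,n),rfl⟩, Quot.mk _ (y, z, 1 * nuK rfl 1 ρZ)⟩
            refine congrArg _ ?_
            rw [one_mul]
            exact (Quot.sound ⟨1, ρZ, (hY.1 j y).symm, rfl, (mul_one _).symm⟩).symm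
          · show nuK hmn ρ 1 * π = nuK h' 1 (nuK rfl 1 ρZ) * (nuK hmn (ρ * σb) 1 * π')
            have e1 : nuK h' 1 (nuK rfl 1 ρZ) = nuK hmn 1 ρZ := by
              rw [← nuK_nuK hij hmn rfl h' 1 1 ρZ, nuK_one]
            rw [h3]
            show nuK hmn ρ 1 * (nuK hmn σb ρZ * π')
              = nuK h' 1 (nuK rfl 1 ρZ) * (nuK hmn (ρ * σb) 1 * π')
            rw [e1, ← mul_assoc, ← mul_assoc, ← nuK_mul, ← nuK_mul]
            simp only [one_mul, mul_one])
        q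

/-- Core of the associator, backward direction. -/
def bwdCore (hX : IsRightAction X) (hY : IsRightAction Y) (hZ : IsRightAction Z)
    (i p k : ℕ) (hip : i * p = k)
    (x : X.obj i) (w : (matProd Y Z).obj p) (π : Perm (Fin k)) :
    (matProd (matProd X Y) Z).obj k :=
  match w with
  | ⟨⟨(j, n), hjn⟩, q⟩ =>
    Quot.lift
      (fun a =>
        (⟨⟨(i * j, n), by rw [Nat.mul_assoc, hjn, hip]⟩,
          Quot.mk _ ((⟨⟨(i, j), rfl⟩, Quot.mk _ (x, a.1, 1)⟩ : (matProd X Y).obj (i * j)),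
            a.2.1, nuK hip 1 a.2.2 * π)⟩ : (matProd (matProd X Y) Z).obj k))
      (by
        rintro ⟨y, z, ρ⟩ ⟨y', z', ρ'⟩ ⟨τ, ρZ, h1, h2, h3⟩
        dsimp only at h1 h2 h3 ⊢
        refine congrArg _ (Quot.sound ?_)
        have h' : (i * j) * n = k := by rw [Nat.mul_assoc, hjn, hip]
        refine ⟨nuK rfl (1 : Perm (Fin i)) τ, ρZ, ?_, h2, ?_⟩
        · show (⟨⟨(i,j),rfl⟩, Quot.mk _ (x, y', 1)⟩ : (matProd X Y).obj (i*j))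
            = ⟨⟨(i,j),rfl⟩, Quot.mk _ (x, y, 1 * nuK rfl 1 τ)⟩
          refine congrArg _ ?_
          rw [one_mul]
          exact (Quot.sound ⟨1, τ, (hX.1 i x).symm, h1, (mul_one _).symm⟩).symm
        · show nuK hip 1 ρ * π = nuK h' (nuK rfl 1 τ) ρZ * (nuK hip 1 ρ' * π)
          rw [h3, nuK_nuK rfl h' hjn hip 1 τ ρZ, nuK_mul_right, mul_assoc]
          rfl)
      q

/-- The associator, backward direction. -/
def bwd (hX : IsRightAction X) (hY : IsRightAction Y) (hZ : IsRightAction Z) (k : ℕ) :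
    (matProd X (matProd Y Z)).obj k → (matProd (matProd X Y) Z).obj k :=
  fun s =>
    match s with
    | ⟨⟨(i, p), hip⟩, q⟩ =>
      Quot.lift (fun a => bwdCore X Y Z hX hY hZ i p k hip a.1 a.2.1 a.2.2)
        (by
          rintro ⟨x, w, π⟩ ⟨x', w', π'⟩ ⟨σ, τp, h1, h2, h3⟩
          dsimp only at h1 h2 h3 ⊢
          subst h1; subst h2
          obtain ⟨⟨⟨j, n⟩, hjn⟩, q'⟩ := w
          induction q' using Quot.ind with
          | mk a =>
          obtain ⟨y, z, ρ⟩ := a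
          show (⟨⟨(i * j, n), _⟩, Quot.mk _ (⟨⟨(i,j), rfl⟩, Quot.mk _ (x, y, 1)⟩, z,
              nuK hip 1 ρ * π)⟩ : (matProd (matProd X Y) Z).obj k)
            = ⟨⟨(i * j, n), _⟩, Quot.mk _ (⟨⟨(i,j), rfl⟩, Quot.mk _ (X.act i x σ, y, 1)⟩, z,
              nuK hip 1 (ρ * τp) * π')⟩
          have h' : (i * j) * n = k := by rw [Nat.mul_assoc, hjn, hip]
          refine congrArg _ (Quot.sound ?_)
          refine ⟨nuK rfl σ (1 : Perm (Fin j)), 1, ?_, (hZ.1 n z).symm, ?_⟩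
          · show (⟨⟨(i,j),rfl⟩, Quot.mk _ (X.act i x σ, y, 1)⟩ : (matProd X Y).obj (i*j))
              = ⟨⟨(i,j),rfl⟩, Quot.mk _ (x, y, 1 * nuK rfl σ 1)⟩
            refine congrArg _ ?_
            rw [one_mul]
            exact (Quot.sound ⟨σ, 1, rfl, (hY.1 j y).symm, (mul_one _).symm⟩).symm
          · show nuK hip 1 ρ * π = nuK h' (nuK rfl σ 1) 1 * (nuK hip 1 (ρ * τp) * π')
            have e1 : nuK h' (nuK rfl σ 1) 1 = nuK hip σ 1 := by
              rw [nuK_nuK rfl h' hjn hip σ 1 1, nuK_one]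
            rw [h3]
            show nuK hip 1 ρ * (nuK hip σ τp * π')
              = nuK h' (nuK rfl σ 1) 1 * (nuK hip 1 (ρ * τp) * π')
            rw [e1, ← mul_assoc, ← mul_assoc, ← nuK_mul, ← nuK_mul]
            simp only [one_mul, mul_one])
        q

end Assoc

section AssocLemmas

variable (X Y Z : SymSeq) (hX : IsRightAction X) (hY : IsRightAction Y) (hZ : IsRightAction Z)

lemma bwd_fwd (k : ℕ) (s : (matProd (matProd X Y) Z).obj k) :
    bwd X Y Z hX hY hZ k (fwd X Y Z hX hY hZ k s) = s := by
  obtain ⟨⟨⟨m, n⟩, hmn⟩, q⟩ := s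
  induction q using Quot.ind with | mk a =>
  obtain ⟨w, z, π⟩ := a
  obtain ⟨⟨⟨i, j⟩, hij⟩, q'⟩ := w
  induction q' using Quot.ind with | mk a =>
  obtain ⟨x, y, ρ⟩ := a
  have hij' : i * j = m := hij
  subst hij'
  show (⟨⟨(i * j, n), _⟩, Quot.mk _ (⟨⟨(i, j), rfl⟩, Quot.mk _ (x, y, 1)⟩, z,
      nuK (by rw [← Nat.mul_assoc]; exact hmn) 1 1 * (nuK hmn ρ 1 * π))⟩ :
        (matProd (matProd X Y) Z).obj k)
    = ⟨⟨(i * j, n), hmn⟩, Quot.mk _ (⟨⟨(i, j), hij⟩, Quot.mk _ (x, y, ρ)⟩, z, π)⟩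
  rw [nuK_one, one_mul]
  refine congrArg _ (Quot.sound ?_)
  refine ⟨ρ, 1, ?_, (hZ.1 n z).symm, rfl⟩
  show (⟨⟨(i, j), hij⟩, Quot.mk _ (x, y, ρ)⟩ : (matProd X Y).obj (i * j))
    = ⟨⟨(i, j), rfl⟩, Quot.mk _ (x, y, 1 * ρ)⟩
  rw [one_mul]

lemma fwd_bwd (k : ℕ) (s : (matProd X (matProd Y Z)).obj k) :
    fwd X Y Z hX hY hZ k (bwd X Y Z hX hY hZ k s) = s := by
  obtain ⟨⟨⟨i, p⟩, hip⟩, q⟩ := s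
  induction q using Quot.ind with | mk a =>
  obtain ⟨x, w, π⟩ := a
  obtain ⟨⟨⟨j, n⟩, hjn⟩, q'⟩ := w
  induction q' using Quot.ind with | mk a =>
  obtain ⟨y, z, ρ⟩ := a
  have hjn' : j * n = p := hjn
  subst hjn'
  show (⟨⟨(i, j * n), _⟩, Quot.mk _ (x, ⟨⟨(j, n), rfl⟩, Quot.mk _ (y, z, 1)⟩,
      nuK (by rw [Nat.mul_assoc]; exact hip) 1 1 * (nuK hip 1 ρ * π))⟩ :
        (matProd X (matProd Y Z)).obj k)
    = ⟨⟨(i, j * n), hip⟩, Quot.mk _ (x, ⟨⟨(j, n), hjn⟩, Quot.mk _ (y, z, ρ)⟩, π)⟩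
  rw [nuK_one, one_mul]
  refine congrArg _ (Quot.sound ?_)
  refine ⟨1, ρ, (hX.1 i x).symm, ?_, rfl⟩
  show (⟨⟨(j, n), hjn⟩, Quot.mk _ (y, z, ρ)⟩ : (matProd Y Z).obj (j * n))
    = ⟨⟨(j, n), rfl⟩, Quot.mk _ (y, z, 1 * ρ)⟩
  rw [one_mul]

lemma fwd_act (k : ℕ) (s : (matProd (matProd X Y) Z).obj k) (g : Perm (Fin k)) :
    fwd X Y Z hX hY hZ k ((matProd (matProd X Y) Z).act k s g)
      = (matProd X (matProd Y Z)).act k (fwd X Y Z hX hY hZ k s) g := by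
  obtain ⟨⟨⟨m, n⟩, hmn⟩, q⟩ := s
  induction q using Quot.ind with | mk a =>
  obtain ⟨w, z, π⟩ := a
  obtain ⟨⟨⟨i, j⟩, hij⟩, q'⟩ := w
  induction q' using Quot.ind with | mk a =>
  obtain ⟨x, y, ρ⟩ := a
  show (⟨⟨(i, j * n), _⟩, Quot.mk _ (x, ⟨⟨(j, n), rfl⟩, Quot.mk _ (y, z, 1)⟩,
      nuK hmn ρ 1 * (π * g))⟩ : (matProd X (matProd Y Z)).obj k)
    = ⟨⟨(i, j * n), _⟩, Quot.mk _ (x, ⟨⟨(j, n), rfl⟩, Quot.mk _ (y, z, 1)⟩,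
      nuK hmn ρ 1 * π * g)⟩
  rw [mul_assoc]

end AssocLemmas

section Units

variable (X : SymSeq)

/-- Forward map of the left unitor. -/
def luF (hX : IsRightAction X) (k : ℕ) : (matProd unitSeq X).obj k → X.obj k :=
  fun s =>
    match s with
    | ⟨⟨(0, j), h⟩, q⟩ => Quot.lift (fun a => unitElim (i := 0) (by omega) a.1)
        (fun a b _ => unitElim (i := 0) (by omega) a.1) q
    | ⟨⟨(1, j), h⟩, q⟩ =>
      Quot.lift (fun a => X.act k (cast (congrArg X.obj (by omega : j = k)) a.2.1) a.2.2)
        (by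
          have hjk : j = k := by omega
          subst hjk
          rintro ⟨u, x, π⟩ ⟨u', x', π'⟩ ⟨σ, τ, h1, h2, h3⟩
          dsimp only at h2 h3 ⊢
          have e : (finCongr h).permCongr (nu 1 j σ τ) = τ := nuK_unit_left h σ τ
          rw [h2, h3, e, hX.2]
          rfl) q
    | ⟨⟨(i+2, j), h⟩, q⟩ => Quot.lift (fun a => unitElim (i := i+2) (by omega) a.1)
        (fun a b _ => unitElim (i := i+2) (by omega) a.1) q

/-- Backward map of the left unitor. -/
def luG (k : ℕ) (x : X.obj k) : (matProd unitSeq X).obj k :=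
  ⟨⟨(1, k), one_mul k⟩, Quot.mk _ (PUnit.unit, x, 1)⟩

lemma luF_luG (hX : IsRightAction X) (k : ℕ) (x : X.obj k) :
    luF X hX k (luG X k x) = x := hX.1 k x

lemma luG_luF (hX : IsRightAction X) (k : ℕ) (s : (matProd unitSeq X).obj k) :
    luG X k (luF X hX k s) = s := by
  obtain ⟨⟨⟨i, j⟩, h⟩, q⟩ := s
  induction q using Quot.ind with | mk a =>
  match i, h with
  | 0, h => exact unitElim (i := 0) (by omega) a.1
  | i+2, h => exact unitElim (i := i+2) (by omega) a.1
  | 1, h =>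
    obtain ⟨u, x, π⟩ := a
    have hjk : j = k := by omega
    subst hjk
    show (⟨⟨(1, j), one_mul j⟩, Quot.mk _ (PUnit.unit, X.act j x π, 1)⟩ :
        (matProd unitSeq X).obj j)
      = ⟨⟨(1, j), h⟩, Quot.mk _ (u, x, π)⟩
    refine congrArg _ (Quot.sound ?_)
    refine ⟨1, π⁻¹, rfl, ?_, ?_⟩
    · show x = X.act j (X.act j x π) π⁻¹
      rw [← hX.2, mul_inv_cancel, hX.1]
    · show (1 : Perm (Fin j)) = (finCongr h).permCongr (nu 1 j 1 π⁻¹) * π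
      have e : (finCongr h).permCongr (nu 1 j 1 π⁻¹) = π⁻¹ := nuK_unit_left h 1 π⁻¹
      rw [e, inv_mul_cancel]

lemma luF_act (hX : IsRightAction X) (k : ℕ) (s : (matProd unitSeq X).obj k)
    (g : Perm (Fin k)) :
    luF X hX k ((matProd unitSeq X).act k s g) = X.act k (luF X hX k s) g := by
  obtain ⟨⟨⟨i, j⟩, h⟩, q⟩ := s
  induction q using Quot.ind with | mk a =>
  match i, h with
  | 0, h => exact unitElim (i := 0) (by omega) a.1
  | i+2, h => exact unitElim (i := i+2) (by omega) a.1
  | 1, h =>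
    obtain ⟨u, x, π⟩ := a
    show X.act k (cast _ x) (π * g) = X.act k (X.act k (cast _ x) π) g
    rw [hX.2]

/-- Forward map of the right unitor. -/
def ruF (hX : IsRightAction X) (k : ℕ) : (matProd X unitSeq).obj k → X.obj k :=
  fun s =>
    match s with
    | ⟨⟨(i, 0), h⟩, q⟩ => Quot.lift (fun a => unitElim (i := 0) (by omega) a.2.1)
        (fun a b _ => unitElim (i := 0) (by omega) a.2.1) q
    | ⟨⟨(i, 1), h⟩, q⟩ =>
      Quot.lift (fun a => X.act k (cast (congrArg X.obj (by omega : i = k)) a.1) a.2.2)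
        (by
          have hik : i = k := by omega
          subst hik
          rintro ⟨x, u, π⟩ ⟨x', u', π'⟩ ⟨σ, τ, h1, h2, h3⟩
          dsimp only at h1 h3 ⊢
          have e : (finCongr h).permCongr (nu i 1 σ τ) = σ := nuK_unit_right h σ τ
          rw [h1, h3, e, hX.2]
          rfl) q
    | ⟨⟨(i, j+2), h⟩, q⟩ => Quot.lift (fun a => unitElim (i := j+2) (by omega) a.2.1)
        (fun a b _ => unitElim (i := j+2) (by omega) a.2.1) q

/-- Backward map of the right unitor. -/
def ruG (k : ℕ) (x : X.obj k) : (matProd X unitSeq).obj k :=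
  ⟨⟨(k, 1), mul_one k⟩, Quot.mk _ (x, PUnit.unit, 1)⟩

lemma ruF_ruG (hX : IsRightAction X) (k : ℕ) (x : X.obj k) :
    ruF X hX k (ruG X k x) = x := hX.1 k x

lemma ruG_ruF (hX : IsRightAction X) (k : ℕ) (s : (matProd X unitSeq).obj k) :
    ruG X k (ruF X hX k s) = s := by
  obtain ⟨⟨⟨i, j⟩, h⟩, q⟩ := s
  induction q using Quot.ind with | mk a =>
  match j, h with
  | 0, h => exact unitElim (i := 0) (by omega) a.2.1
  | j+2, h => exact unitElim (i := j+2) (by omega) a.2.1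
  | 1, h =>
    obtain ⟨x, u, π⟩ := a
    have hik : i = k := by omega
    subst hik
    show (⟨⟨(i, 1), mul_one i⟩, Quot.mk _ (X.act i x π, PUnit.unit, 1)⟩ :
        (matProd X unitSeq).obj i)
      = ⟨⟨(i, 1), h⟩, Quot.mk _ (x, u, π)⟩
    refine congrArg _ (Quot.sound ?_)
    refine ⟨π⁻¹, 1, ?_, rfl, ?_⟩
    · show x = X.act i (X.act i x π) π⁻¹
      rw [← hX.2, mul_inv_cancel, hX.1]
    · show (1 : Perm (Fin i)) = (finCongr h).permCongr (nu i 1 π⁻¹ 1) * π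
      have e : (finCongr h).permCongr (nu i 1 π⁻¹ 1) = π⁻¹ := nuK_unit_right h π⁻¹ 1
      rw [e, inv_mul_cancel]

lemma ruF_act (hX : IsRightAction X) (k : ℕ) (s : (matProd X unitSeq).obj k)
    (g : Perm (Fin k)) :
    ruF X hX k ((matProd X unitSeq).act k s g) = X.act k (ruF X hX k s) g := by
  obtain ⟨⟨⟨i, j⟩, h⟩, q⟩ := s
  induction q using Quot.ind with | mk a =>
  match j, h with
  | 0, h => exact unitElim (i := 0) (by omega) a.2.1
  | j+2, h => exact unitElim (i := j+2) (by omega) a.2.1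
  | 1, h =>
    obtain ⟨x, u, π⟩ := a
    show X.act k (cast _ x) (π * g) = X.act k (X.act k (cast _ x) π) g
    rw [hX.2]

end Units


/-- The matrix tensor product is a monoidal product on symmetric sequences: it carries
right `Σ_k`-actions, it is associative up to equivariant natural isomorphism, and the
symmetric sequence concentrated in arity `1` with value a point is a two-sided unit up to
equivariant isomorphism. -/
theorem matProd_monoidal (X Y Z : SymSeq) (hX : IsRightAction X) (hY : IsRightAction Y)
    (hZ : IsRightAction Z) :
    IsRightAction (matProd X Y) ∧
    (∃ assoc : ∀ k, (matProd (matProd X Y) Z).obj k ≃ (matProd X (matProd Y Z)).obj k,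
      ∀ k x g, assoc k ((matProd (matProd X Y) Z).act k x g) =
        (matProd X (matProd Y Z)).act k (assoc k x) g) ∧
    (∃ lu : ∀ k, (matProd unitSeq X).obj k ≃ X.obj k,
      ∀ k x g, lu k ((matProd unitSeq X).act k x g) = X.act k (lu k x) g) ∧
    (∃ ru : ∀ k, (matProd X unitSeq).obj k ≃ X.obj k,
      ∀ k x g, ru k ((matProd X unitSeq).act k x g) = X.act k (ru k x) g) := by
  refine ⟨⟨?_, ?_⟩, ?_, ?_, ?_⟩
  · rintro k ⟨p, q⟩
    induction q using Quot.ind with | mk a =>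
    show (⟨p, Quot.mk _ (a.1, a.2.1, a.2.2 * 1)⟩ :
        Σ p : {p : ℕ × ℕ // p.1 * p.2 = k}, Quot (mtRel X Y p.1.1 p.1.2 k p.2))
      = ⟨p, Quot.mk _ a⟩
    rw [mul_one]
  · rintro k ⟨p, q⟩ g h
    induction q using Quot.ind with | mk a =>
    show (⟨p, Quot.mk _ (a.1, a.2.1, a.2.2 * (g * h))⟩ :
        Σ p : {p : ℕ × ℕ // p.1 * p.2 = k}, Quot (mtRel X Y p.1.1 p.1.2 k p.2))
      = ⟨p, Quot.mk _ (a.1, a.2.1, a.2.2 * g * h)⟩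
    rw [mul_assoc]
  · exact ⟨fun k => ⟨fwd X Y Z hX hY hZ k, bwd X Y Z hX hY hZ k,
      bwd_fwd X Y Z hX hY hZ k, fwd_bwd X Y Z hX hY hZ k⟩, fwd_act X Y Z hX hY hZ⟩
  · exact ⟨fun k => ⟨luF X hX k, luG X k, luG_luF X hX k, luF_luG X hX k⟩, luF_act X hX⟩
  · exact ⟨fun k => ⟨ruF X hX k, ruG X k, ruG_ruF X hX k, ruF_ruG X hX k⟩, ruF_act X hX⟩
end
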